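/- arXiv:1602.08730 — 10 statements merged into one kernel-verified Lean document; each statement's English description precedes it below -/
import Mathlib

section
/- Let δ > 0 be a real number and let n, r be natural numbers with r ≥ 1, n ≥ 1 and (n : ℝ)^{δ/2} ≥ 1000. Set q = (n : ℝ)^{−(2+δ)/2}. Then ∑_{i=r}^{n} (n choose i) · q^i · (1−q)^{n−i} ≤ 1.01 · n^{−δ·r/2} / r!. -/
open Real Finset Nat

/-! With `q = n^{-(2+δ)/2}` the mean of the binomial is `x = n q = n^{-δ/2} ≤ 1/1000`. Bounding
`C(n,i) q^i (1-q)^{n-i} ≤ x^i / i! ≤ x^i / r!` for `i ≥ r`, the tail is at most a geometric series,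
`x^r / ((1 - x) r!)`, and `1 / (1 - x) ≤ 1.01`. -/

lemma choose_mul_pow_mul_pow_le_div_factorial (n i : ℕ) {q : ℝ} (hq0 : 0 ≤ q) (hq1 : q ≤ 1) :
    (n.choose i : ℝ) * q ^ i * (1 - q) ^ (n - i) ≤ (n * q) ^ i / i ! :=
  calc (n.choose i : ℝ) * q ^ i * (1 - q) ^ (n - i)
      ≤ (n.choose i : ℝ) * q ^ i :=
        mul_le_of_le_one_right (by positivity) (pow_le_one₀ (by linarith) (by linarith))
    _ ≤ (n : ℝ) ^ i / i ! * q ^ i := by gcongr; exact choose_le_pow_div i n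
    _ = (n * q) ^ i / i ! := by rw [mul_pow, div_mul_eq_mul_div]

lemma binomial_tail_le (n r : ℕ) {q : ℝ} (hq0 : 0 ≤ q) (hq1 : q ≤ 1) (hnq : n * q < 1) :
    ∑ i ∈ Icc r n, (n.choose i : ℝ) * q ^ i * (1 - q) ^ (n - i)
      ≤ (n * q) ^ r / (1 - n * q) / r ! := by
  have hmean : 0 ≤ (n : ℝ) * q := by positivity
  calc ∑ i ∈ Icc r n, (n.choose i : ℝ) * q ^ i * (1 - q) ^ (n - i)
      ≤ ∑ i ∈ Icc r n, (n * q) ^ i / r ! := by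
        refine sum_le_sum fun i hi => ?_
        refine (choose_mul_pow_mul_pow_le_div_factorial n i hq0 hq1).trans ?_
        gcongr
        exact (mem_Icc.mp hi).1
    _ = (∑ i ∈ Ico r (n + 1), (n * q) ^ i) / r ! := by
        rw [← sum_div, Ico_add_one_right_eq_Icc]
    _ ≤ (n * q) ^ r / (1 - n * q) / r ! := by
        gcongr
        exact geom_sum_Ico_le_of_lt_one hmean hnq

theorem stmt2_general (δ : ℝ) (n r : ℕ) (hn : 1 ≤ n)
    (hbig : (1000 : ℝ) ≤ (n : ℝ) ^ (δ / 2)) :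
    ∑ i ∈ Finset.Icc r n,
        (n.choose i : ℝ) * ((n : ℝ) ^ (-(2 + δ) / 2)) ^ i
          * (1 - (n : ℝ) ^ (-(2 + δ) / 2)) ^ (n - i)
      ≤ 1.01 * (n : ℝ) ^ (-(δ * (r : ℝ)) / 2) / (Nat.factorial r : ℝ) := by
  have hn1 : (1 : ℝ) ≤ n := by exact_mod_cast hn
  have hn0 : (0 : ℝ) < n := by linarith
  set q : ℝ := (n : ℝ) ^ (-(2 + δ) / 2) with hq
  set x : ℝ := (n : ℝ) ^ (-(δ / 2)) with hx
  have hmean : n * q = x := by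
    rw [hq, hx, mul_comm, ← rpow_add_one hn0.ne']
    ring_nf
  have hx_le : x ≤ 1 / 1000 := by
    rw [hx, rpow_neg hn0.le, one_div]
    exact inv_anti₀ (by norm_num) hbig
  have hq0 : 0 ≤ q := by positivity
  have hq1 : q ≤ 1 := (le_mul_of_one_le_left hq0 hn1).trans (by linarith)
  have hxr : x ^ r = (n : ℝ) ^ (-(δ * (r : ℝ)) / 2) := by
    rw [hx, ← rpow_natCast, ← rpow_mul hn0.le]
    ring_nf
  have hinv_le : 1 / (1 - x) ≤ 1.01 := by
    rw [div_le_iff₀ (by linarith)]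
    linarith
  calc _ ≤ x ^ r / (1 - x) / r ! := by
        simpa only [hmean] using binomial_tail_le n r hq0 hq1 (by linarith)
    _ = x ^ r * (1 / (1 - x)) / r ! := by ring
    _ ≤ x ^ r * 1.01 / r ! := by gcongr
    _ = _ := by rw [hxr]; ring

/-- Binomial tail bound: with `q = n^{-(2+δ)/2}` and `n^{δ/2} ≥ 1000`,
`∑_{i=r}^n C(n,i) q^i (1-q)^{n-i} ≤ 1.01 n^{-δ r / 2} / r!`. -/
theorem stmt2 (δ : ℝ) (hδ : 0 < δ) (n r : ℕ) (hr : 1 ≤ r) (hn : 1 ≤ n)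
    (hbig : (1000 : ℝ) ≤ (n : ℝ) ^ (δ / 2)) :
    ∑ i ∈ Finset.Icc r n,
        (n.choose i : ℝ) * ((n : ℝ) ^ (-(2 + δ) / 2)) ^ i
          * (1 - (n : ℝ) ^ (-(2 + δ) / 2)) ^ (n - i)
      ≤ 1.01 * (n : ℝ) ^ (-(δ * (r : ℝ)) / 2) / (Nat.factorial r : ℝ) :=
  stmt2_general δ n r hn hbig
end

section
/- Let α ≥ 1 be a real number and let i, n be natural numbers with 2α ≤ i ≤ n. Then ∏_{r=i+1}^{n} (1 − 4α²/r²) ≥ 16^{−α}. -/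
/-!
For an integer `c` the product telescopes:
`∏_{r=c+1}^n (1 - c²/r²) = C(n+c, c) / (C(n, c) C(2c, c)) ≥ 1 / C(2c, c) ≥ 4^{-c}`,
and dropping factors in `[0, 1]` only increases it. Each factor `1 - t²/r²` is nonnegative and concave
in `t` for `|t| ≤ r`, hence log-concave by weighted AM–GM, so the product is log-concave in `t`.
Interpolating between the integers `⌈t⌉ - 1` and `⌈t⌉` gives `∏_{r=m+1}^n (1 - t²/r²) ≥ 4^{-t}` for
real `0 < t ≤ m`; take `t = 2α`.
-/

open Finset Real

theorem prod_Ioc_one_sub_sq_div_sq_eq (c n : ℕ) (hcn : c ≤ n) :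
    ∏ r ∈ Ioc c n, (1 - (c : ℝ) ^ 2 / (r : ℝ) ^ 2) =
      ((n + c).choose c : ℝ) / ((n.choose c : ℝ) * c.centralBinom) := by
  have hC : (c.centralBinom : ℝ) ≠ 0 := Nat.cast_ne_zero.2 (Nat.centralBinom_ne_zero c)
  induction n, hcn using Nat.le_induction with
  | base =>
    rw [Ioc_self, prod_empty, Nat.choose_self, ← two_mul, ← Nat.centralBinom_eq_two_mul_choose]
    simp [hC]
  | succ n hcn ih =>
    have hB := congrArg (Nat.cast (R := ℝ)) (Nat.choose_mul_succ_eq n c)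
    have hA := congrArg (Nat.cast (R := ℝ)) (Nat.choose_mul_succ_eq (n + c) c)
    push_cast [Nat.cast_sub (show c ≤ n + 1 by omega),
      Nat.cast_sub (show c ≤ n + c + 1 by omega)] at hA hB
    have hchoose_pos : (0 : ℝ) < n.choose c := Nat.cast_pos.2 (Nat.choose_pos hcn)
    have hchoose_succ_pos : (0 : ℝ) < (n + 1).choose c := Nat.cast_pos.2 (Nat.choose_pos (by omega))
    rw [prod_Ioc_succ_top (by omega), ih, show n + 1 + c = n + c + 1 by ring]
    field_simp
    push_cast
    linear_combination ((n : ℝ) + 1 - c) * ((n + 1).choose c : ℝ) * hA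
      - ((n + c + 1).choose c : ℝ) * ((n : ℝ) + 1) * hB

theorem centralBinom_inv_le_prod_Ioc (c n : ℕ) (hcn : c ≤ n) :
    ((c.centralBinom : ℝ))⁻¹ ≤ ∏ r ∈ Ioc c n, (1 - (c : ℝ) ^ 2 / (r : ℝ) ^ 2) := by
  have hB : (0 : ℝ) < n.choose c := Nat.cast_pos.2 (Nat.choose_pos hcn)
  have hBA : (n.choose c : ℝ) ≤ (n + c).choose c := by exact_mod_cast Nat.choose_le_add n c c
  rw [prod_Ioc_one_sub_sq_div_sq_eq c n hcn, div_mul_eq_div_div, inv_eq_one_div]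
  gcongr
  exact (one_le_div hB).2 hBA

theorem four_rpow_neg_le_prod_Ioc (c m n : ℕ) (hcm : c ≤ m) :
    (4 : ℝ) ^ (-(c : ℝ)) ≤ ∏ r ∈ Ioc m n, (1 - (c : ℝ) ^ 2 / (r : ℝ) ^ 2) := by
  have hfactor : ∀ r ∈ Ioc c n, 0 ≤ 1 - (c : ℝ) ^ 2 / (r : ℝ) ^ 2 := by
    intro r hr
    have hcr : (c : ℝ) ≤ r := by exact_mod_cast (mem_Ioc.1 hr).1.le
    exact sub_nonneg.2 (div_le_one_of_le₀ (by gcongr) (by positivity))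
  rcases le_total n m with hnm | hmn
  · rw [Ioc_eq_empty_of_le hnm, prod_empty]
    exact rpow_le_one_of_one_le_of_nonpos (by norm_num) (by simp)
  calc (4 : ℝ) ^ (-(c : ℝ)) = ((4 : ℝ) ^ c)⁻¹ := by rw [rpow_neg (by norm_num), rpow_natCast]
    _ ≤ ((c.centralBinom : ℝ))⁻¹ := by
      gcongr
      · exact_mod_cast Nat.centralBinom_pos c
      · exact_mod_cast Nat.centralBinom_le_four_pow c
    _ ≤ ∏ r ∈ Ioc c n, (1 - (c : ℝ) ^ 2 / (r : ℝ) ^ 2) :=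
      centralBinom_inv_le_prod_Ioc c n (hcm.trans hmn)
    _ ≤ ∏ r ∈ Ioc m n, (1 - (c : ℝ) ^ 2 / (r : ℝ) ^ 2) :=
      prod_le_prod_of_subset_of_le_one (Ioc_subset_Ioc_left hcm) hfactor
        fun r _ _ => sub_le_self _ (by positivity)

theorem one_sub_sq_div_rpow_mul_rpow_le {a x y θ : ℝ} (ha : 0 ≤ a) (hx : x ^ 2 ≤ a)
    (hy : y ^ 2 ≤ a) (hθ₀ : 0 ≤ θ) (hθ₁ : θ ≤ 1) :
    (1 - x ^ 2 / a) ^ θ * (1 - y ^ 2 / a) ^ (1 - θ) ≤ 1 - (θ * x + (1 - θ) * y) ^ 2 / a := by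
  have h1θ : 0 ≤ 1 - θ := sub_nonneg.2 hθ₁
  have hsq : (θ * x + (1 - θ) * y) ^ 2 ≤ θ * x ^ 2 + (1 - θ) * y ^ 2 := by
    nlinarith [mul_nonneg (mul_nonneg hθ₀ h1θ) (sq_nonneg (x - y))]
  calc (1 - x ^ 2 / a) ^ θ * (1 - y ^ 2 / a) ^ (1 - θ)
      ≤ θ * (1 - x ^ 2 / a) + (1 - θ) * (1 - y ^ 2 / a) :=
        geom_mean_le_arith_mean2_weighted hθ₀ h1θ (sub_nonneg.2 (div_le_one_of_le₀ hx ha))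
          (sub_nonneg.2 (div_le_one_of_le₀ hy ha)) (by ring)
    _ = 1 - (θ * x ^ 2 + (1 - θ) * y ^ 2) / a := by ring
    _ ≤ 1 - (θ * x + (1 - θ) * y) ^ 2 / a := by gcongr

theorem prod_one_sub_sq_div_sq_rpow_mul_rpow_le (s : Finset ℕ) {x y θ : ℝ}
    (hx : ∀ r ∈ s, x ^ 2 ≤ (r : ℝ) ^ 2) (hy : ∀ r ∈ s, y ^ 2 ≤ (r : ℝ) ^ 2)
    (hθ₀ : 0 ≤ θ) (hθ₁ : θ ≤ 1) :
    (∏ r ∈ s, (1 - x ^ 2 / (r : ℝ) ^ 2)) ^ θ * (∏ r ∈ s, (1 - y ^ 2 / (r : ℝ) ^ 2)) ^ (1 - θ) ≤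
      ∏ r ∈ s, (1 - (θ * x + (1 - θ) * y) ^ 2 / (r : ℝ) ^ 2) := by
  have hnonneg {z : ℝ} (hz : ∀ r ∈ s, z ^ 2 ≤ (r : ℝ) ^ 2) :
      ∀ r ∈ s, 0 ≤ 1 - z ^ 2 / (r : ℝ) ^ 2 :=
    fun r hr => sub_nonneg.2 (div_le_one_of_le₀ (hz r hr) (by positivity))
  rw [← finsetProd_rpow _ _ (hnonneg hx), ← finsetProd_rpow _ _ (hnonneg hy), ← prod_mul_distrib]
  exact prod_le_prod (fun r hr => mul_nonneg (rpow_nonneg (hnonneg hx r hr) _)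
      (rpow_nonneg (hnonneg hy r hr) _))
    fun r hr => one_sub_sq_div_rpow_mul_rpow_le (by positivity) (hx r hr) (hy r hr) hθ₀ hθ₁

theorem four_rpow_neg_le_prod_Ioc_of_le {t : ℝ} {m : ℕ} (ht : 0 < t) (htm : t ≤ m) (n : ℕ) :
    (4 : ℝ) ^ (-t) ≤ ∏ r ∈ Ioc m n, (1 - t ^ 2 / (r : ℝ) ^ 2) := by
  obtain ⟨k, hk⟩ : ∃ k, ⌈t⌉₊ = k + 1 := Nat.exists_eq_add_one.2 (Nat.ceil_pos.2 ht)
  have hkt : (k : ℝ) < t := by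
    have := Nat.ceil_lt_add_one ht.le
    rw [hk] at this
    push_cast at this
    linarith
  have htk : t ≤ k + 1 := by exact_mod_cast hk ▸ Nat.le_ceil t
  have hkm : k + 1 ≤ m := hk ▸ Nat.ceil_le.2 htm
  have hsq (c : ℕ) (hcm : c ≤ m) : ∀ r ∈ Ioc m n, (c : ℝ) ^ 2 ≤ (r : ℝ) ^ 2 := by
    intro r hr
    gcongr
    exact_mod_cast hcm.trans (mem_Ioc.1 hr).1.le
  set θ : ℝ := k + 1 - t with hθ
  have ht_eq : t = θ * k + (1 - θ) * ((k + 1 : ℕ) : ℝ) := by rw [hθ]; push_cast; ring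
  have hPk := four_rpow_neg_le_prod_Ioc k m n (by omega)
  calc (4 : ℝ) ^ (-t)
        = ((4 : ℝ) ^ (-(k : ℝ))) ^ θ * ((4 : ℝ) ^ (-((k + 1 : ℕ) : ℝ))) ^ (1 - θ) := by
        rw [← rpow_mul (by norm_num), ← rpow_mul (by norm_num), ← rpow_add (by norm_num)]
        congr 1
        linear_combination -ht_eq
    _ ≤ (∏ r ∈ Ioc m n, (1 - (k : ℝ) ^ 2 / (r : ℝ) ^ 2)) ^ θ *
          (∏ r ∈ Ioc m n, (1 - ((k + 1 : ℕ) : ℝ) ^ 2 / (r : ℝ) ^ 2)) ^ (1 - θ) := by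
        gcongr
        · exact rpow_nonneg ((by positivity : (0 : ℝ) ≤ 4 ^ (-(k : ℝ))).trans hPk) _
        · linarith
        · exact four_rpow_neg_le_prod_Ioc (k + 1) m n hkm
    _ ≤ ∏ r ∈ Ioc m n, (1 - (θ * k + (1 - θ) * ((k + 1 : ℕ) : ℝ)) ^ 2 / (r : ℝ) ^ 2) :=
        prod_one_sub_sq_div_sq_rpow_mul_rpow_le _ (hsq k (by omega)) (hsq (k + 1) hkm)
          (by linarith) (by linarith)
    _ = ∏ r ∈ Ioc m n, (1 - t ^ 2 / (r : ℝ) ^ 2) := by rw [← ht_eq]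

theorem stmt5_general (α : ℝ) (hα : 1 ≤ α) (i n : ℕ) (h2α : 2 * α ≤ (i : ℝ)) :
    (16 : ℝ) ^ (-α) ≤ ∏ r ∈ Finset.Icc (i + 1) n, (1 - 4 * α ^ 2 / (r : ℝ) ^ 2) := by
  calc (16 : ℝ) ^ (-α) = (4 : ℝ) ^ (-(2 * α)) := by
        rw [show (16 : ℝ) = 4 ^ (2 : ℝ) by norm_num, ← rpow_mul (by norm_num)]
        ring_nf
    _ ≤ ∏ r ∈ Ioc i n, (1 - (2 * α) ^ 2 / (r : ℝ) ^ 2) :=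
        four_rpow_neg_le_prod_Ioc_of_le (by linarith) h2α n
    _ = ∏ r ∈ Icc (i + 1) n, (1 - 4 * α ^ 2 / (r : ℝ) ^ 2) := by
        rw [Icc_add_one_left_eq_Ioc, mul_pow]
        norm_num

/-- For `α ≥ 1` and integers `2α ≤ i ≤ n`: `∏_{r=i+1}^n (1 - 4α²/r²) ≥ 16^{-α}`. -/
theorem stmt5 (α : ℝ) (hα : 1 ≤ α) (i n : ℕ) (h2α : 2 * α ≤ (i : ℝ)) (hin : i ≤ n) :
    (16 : ℝ) ^ (-α) ≤ ∏ r ∈ Finset.Icc (i + 1) n, (1 - 4 * α ^ 2 / (r : ℝ) ^ 2) :=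
  stmt5_general α hα i n h2α
end

section
/- Let c > 1 and let i, n be real numbers with 1 ≤ i ≤ n. Then the function k ↦ f(i,n,k) is nondecreasing and concave on the set of reals k ≥ 0. -/
open Real

/-!
The argument of the logarithm in `oddf c i n k` is an affine function `p + q k` of `k`, with
`p = a n / i > 0` and slope `q = 2 (a - 1) / ((c - 1) i) ≥ 0`, where `a = (i/n)^(2/(c+1)-1) ≥ 1`
because `i/n ≤ 1` and the exponent is nonpositive. The logarithm of a positive nondecreasing
affine function is nondecreasing and concave.
-/

noncomputable def oddf (c i n k : ℝ) : ℝ :=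
  Real.log (((i / n) ^ (2 / (c + 1) - 1) * (2 * k + (c - 1) * n) - 2 * k) / ((c - 1) * i))

section LogAffine

variable {s : Set ℝ} {p q : ℝ}

theorem monotoneOn_log_affine (hq : 0 ≤ q) (hpos : ∀ k ∈ s, 0 < p + q * k) :
    MonotoneOn (fun k => log (p + q * k)) s :=
  fun x hx _ _ hxy => log_le_log (hpos x hx) (by gcongr)

theorem concaveOn_log_affine (hs : Convex ℝ s) (hpos : ∀ k ∈ s, 0 < p + q * k) :
    ConcaveOn ℝ s (fun k => log (p + q * k)) := by
  refine ⟨hs, fun x hx y hy α β hα hβ hαβ => ?_⟩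
  calc α • log (p + q * x) + β • log (p + q * y)
      ≤ log (α • (p + q * x) + β • (p + q * y)) :=
        strictConcaveOn_log_Ioi.concaveOn.2 (hpos x hx) (hpos y hy) hα hβ hαβ
    _ = log (p + q * (α • x + β • y)) := by
        simp only [smul_eq_mul]
        congr 1
        linear_combination p * hαβ

end LogAffine

theorem oddf_eq_log_affine {c i : ℝ} (hc : c ≠ 1) (hi : i ≠ 0) (n k : ℝ) :
    oddf c i n k = log ((i / n) ^ (2 / (c + 1) - 1) * n / i
      + 2 * ((i / n) ^ (2 / (c + 1) - 1) - 1) / ((c - 1) * i) * k) := by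
  have hc' : c - 1 ≠ 0 := sub_ne_zero.2 hc
  unfold oddf
  congr 1
  field_simp
  ring

/-- For `c > 1` and `1 ≤ i ≤ n`, the map `k ↦ f(i,n,k)` is nondecreasing and concave
on `k ≥ 0`. -/
theorem stmt8 (c i n : ℝ) (hc : 1 < c) (hi : 1 ≤ i) (hin : i ≤ n) :
    MonotoneOn (fun k : ℝ => oddf c i n k) (Set.Ici 0) ∧
    ConcaveOn ℝ (Set.Ici 0) (fun k : ℝ => oddf c i n k) := by
  have hi0 : 0 < i := by linarith
  have hn0 : 0 < n := by linarith
  have ha : 1 ≤ (i / n) ^ (2 / (c + 1) - 1) :=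
    one_le_rpow_of_pos_of_le_one_of_nonpos (by positivity) ((div_le_one hn0).2 hin)
      (by rw [sub_nonpos, div_le_one (by linarith)]; linarith)
  set a := (i / n) ^ (2 / (c + 1) - 1)
  have hq : 0 ≤ 2 * (a - 1) / ((c - 1) * i) :=
    div_nonneg (by linarith) (mul_pos (by linarith) hi0).le
  have hpos : ∀ k ∈ Set.Ici (0 : ℝ), 0 < a * n / i + 2 * (a - 1) / ((c - 1) * i) * k :=
    fun k hk => add_pos_of_pos_of_nonneg (by positivity) (mul_nonneg hq hk)
  simp only [oddf_eq_log_affine hc.ne' hi0.ne']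
  exact ⟨monotoneOn_log_affine hq hpos, concaveOn_log_affine (convex_Ici 0) hpos⟩
end

section
/- Let c ≥ 3 and let i, n, k be real numbers with 1 ≤ i, i + 1 ≤ n, and k ≥ n. Then 2/n + f(i, n−1, k·e^{−2/n}) ≤ f(i, n, k). -/
/-!
With `t = (c - 1)/(c + 1)` the exponent `2/(c + 1) - 1` is `-t`, and passing from `n` to `n - 1`
multiplies `(i/n)^(-t)` by `q = (1 - 1/n)^t`. Since `e^{2/n} · k e^{-2/n} = k`, the claim reduces
to `q · (2k + e^{2/n}(c - 1)(n - 1)) ≤ 2k + (c - 1)n`. As `q ≤ 1` and `k ≥ n`, it suffices to take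
`k = n`, where, after dividing by `(c + 1)n`, it reads `(1 - x)^t (1 - t + t e^{2x}(1 - x)) ≤ 1`
at `x = 1/n`. This follows from Bernoulli's inequality `(1 - x)^t ≤ 1 - t x` together with
`e^{2x}(1 - x) ≤ 1 + x`, i.e. `2x ≤ log ((1 + x)/(1 - x))`.
-/

open Real

theorem two_mul_le_log_one_add_sub_log_one_sub {x : ℝ} (hx0 : 0 ≤ x) (hx1 : x < 1) :
    2 * x ≤ log (1 + x) - log (1 - x) := by
  have hsum := hasSum_log_sub_log_of_abs_lt_one (abs_lt.mpr ⟨by linarith, hx1⟩)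
  simpa using le_hasSum hsum 0 fun k _ => by positivity

theorem exp_two_mul_mul_one_sub_le_one_add {x : ℝ} (hx0 : 0 ≤ x) (hx1 : x < 1) :
    exp (2 * x) * (1 - x) ≤ 1 + x := by
  have h := two_mul_le_log_one_add_sub_log_one_sub hx0 hx1
  rw [le_sub_iff_add_le, ← log_exp (2 * x), ← log_mul (exp_ne_zero _) (by linarith)] at h
  exact (log_le_log_iff (by positivity) (by linarith)).mp h

theorem one_sub_rpow_mul_le_one {t x : ℝ} (ht0 : 0 ≤ t) (ht1 : t ≤ 1) (hx0 : 0 ≤ x)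
    (hx1 : x < 1) : (1 - x) ^ t * (1 - t + t * (exp (2 * x) * (1 - x))) ≤ 1 := by
  have hbernoulli : (1 - x) ^ t ≤ 1 - t * x := by
    simpa [sub_eq_add_neg] using rpow_one_add_le_one_add_mul_self (s := -x) (by linarith) ht0 ht1
  have hexp : 1 - t + t * (exp (2 * x) * (1 - x)) ≤ 1 + t * x := by
    nlinarith [exp_two_mul_mul_one_sub_le_one_add hx0 hx1]
  calc (1 - x) ^ t * (1 - t + t * (exp (2 * x) * (1 - x)))
      ≤ (1 - t * x) * (1 + t * x) := by
        gcongr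
        have := exp_pos (2 * x)
        nlinarith
    _ ≤ 1 := by nlinarith [sq_nonneg (t * x)]

theorem sub_one_div_rpow_mul_le {c n k : ℝ} (hc : 1 ≤ c) (hn : 1 < n) (hk : n ≤ k) :
    ((n - 1) / n) ^ ((c - 1) / (c + 1)) * (2 * k + exp (2 / n) * ((c - 1) * (n - 1)))
      ≤ 2 * k + (c - 1) * n := by
  set t := (c - 1) / (c + 1) with ht
  have ht0 : 0 ≤ t := div_nonneg (by linarith) (by linarith)
  have ht1 : t ≤ 1 := (div_le_one (by linarith)).mpr (by linarith)
  have hkey := one_sub_rpow_mul_le_one ht0 ht1 (by positivity) ((div_lt_one (by linarith)).mpr hn)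
  rw [show 1 - 1 / n = (n - 1) / n by field_simp, mul_one_div] at hkey
  set q := ((n - 1) / n) ^ t
  have hq1 : q ≤ 1 :=
    rpow_le_one (by positivity) (div_le_one_of_le₀ (by linarith) (by linarith)) ht0
  have hscaled : q * (2 * n + exp (2 / n) * ((c - 1) * (n - 1))) ≤ (c + 1) * n :=
    calc q * (2 * n + exp (2 / n) * ((c - 1) * (n - 1)))
        = (c + 1) * n * (q * (1 - t + t * (exp (2 / n) * ((n - 1) / n)))) := by
          rw [ht]; field_simp; ring
      _ ≤ (c + 1) * n := mul_le_of_le_one_right (by positivity) hkey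
  nlinarith [mul_le_of_le_one_left (by linarith : 0 ≤ k - n) hq1]

theorem div_rpow_neg_eq_mul_div_rpow {x a b : ℝ} (hx : 0 ≤ x) (ha : 0 < a) (hb : 0 < b)
    (t : ℝ) : (x / b) ^ (-t) = (x / a) ^ (-t) * (b / a) ^ t := by
  rw [show x / b = x / a * (a / b) by field_simp, mul_rpow (by positivity) (by positivity)]
  congr 1
  rw [rpow_neg (by positivity), ← inv_rpow (by positivity), inv_div]

theorem add_log_div_le_log_div {s L R D : ℝ} (hL : 0 < L) (hD : 0 < D) (h : exp s * L ≤ R) :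
    s + log (L / D) ≤ log (R / D) := by
  rw [← log_exp s, ← log_mul (exp_ne_zero s) (div_pos hL hD).ne', ← mul_div_assoc]
  exact log_le_log (by positivity) (div_le_div_of_nonneg_right h hD.le)

/-- For `c ≥ 3`, `1 ≤ i`, `i + 1 ≤ n`, `k ≥ n`:
`2/n + f(i, n-1, k e^{-2/n}) ≤ f(i,n,k)`. -/
theorem stmt11 (c i n k : ℝ) (hc : 3 ≤ c) (hi : 1 ≤ i) (hin : i + 1 ≤ n) (hk : n ≤ k) :
    2 / n + oddf c i (n - 1) (k * Real.exp (-(2 / n))) ≤ oddf c i n k := by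
  have hn : 1 < n := by linarith
  have hexponent : 2 / (c + 1) - 1 = -((c - 1) / (c + 1)) := by field_simp; ring
  set t := (c - 1) / (c + 1)
  set k' := k * exp (-(2 / n)) with hk'
  have hk'0 : 0 < k' := mul_pos (by linarith) (exp_pos _)
  have hk'k : exp (2 / n) * k' = k := by rw [hk', mul_left_comm, ← exp_add]; simp
  have hge : 1 ≤ (i / (n - 1)) ^ (-t) :=
    one_le_rpow_of_pos_of_le_one_of_nonpos (by positivity)
      ((div_le_one (by linarith)).mpr (by linarith))
      (neg_nonpos.mpr (div_nonneg (by linarith) (by linarith)))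
  have hpos : 0 < (i / (n - 1)) ^ (-t) * (2 * k' + (c - 1) * (n - 1)) - 2 * k' := by
    have : 0 < (c - 1) * (n - 1) := mul_pos (by linarith) (by linarith)
    nlinarith [le_mul_of_one_le_left (by positivity : 0 ≤ 2 * k' + (c - 1) * (n - 1)) hge]
  have hnum : exp (2 / n) * ((i / (n - 1)) ^ (-t) * (2 * k' + (c - 1) * (n - 1)) - 2 * k')
      ≤ (i / n) ^ (-t) * (2 * k + (c - 1) * n) - 2 * k := by
    rw [div_rpow_neg_eq_mul_div_rpow (by linarith) (by linarith : (0 : ℝ) < n) (by linarith) t]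
    calc _ = (i / n) ^ (-t) * (((n - 1) / n) ^ t * (2 * k + exp (2 / n) * ((c - 1) * (n - 1))))
          - 2 * k := by rw [← hk'k]; ring
      _ ≤ (i / n) ^ (-t) * (2 * k + (c - 1) * n) - 2 * k := by
        gcongr
        exact sub_one_div_rpow_mul_le (by linarith) hn hk
  unfold oddf
  rw [hexponent]
  exact add_log_div_le_log_div hpos (mul_pos (by linarith) (by linarith)) hnum
end

section
/- Let i, r be natural numbers with 100 ≤ i ≤ r, let γ be a real number with γ ≥ 2·log r, and let a be a real number with 0 < a < 1. Define F : (0,∞) → ℝ by F(x) = γ·(1 − (log(x/i))²/(log(x/r))²) if x ≤ 1 and F(x) = 2·log(r/i) if x > 1. Let (Ω, μ) be a probability space and A : Ω → ℝ a measurable function with A(ω) > 0 almost everywhere, with A integrable, ω ↦ F(A(ω)) integrable, and ∫ A dμ ≤ a. Then ∫ F(A(ω)) dμ(ω) ≤ γ·(1 − (log(a/i))²/(log(a/r))²). -/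
/-!
With `I = log i`, `R = log r` and `t = log x`, the branch `x ≤ 1` of `F` is
`G x = γ (1 - (t - I)² / (t - R)²)`. Its second derivative has the sign of
`(t - R) - (t - I)(t - R + 3)`, which is `≤ 0` as soon as `t ≤ 0` and `I ≥ 2`
(true since `i ≥ 100 > e²`), so `G` is concave on `(0, 1]` and lies below its tangent line at `a`,
whose slope `m` is `≥ 0`.
For `x > 1` the same line still dominates `F x = 2 (R - I)`: the tangent line is above `G 1`
there, and `G 1 = γ (1 - I² / R²) ≥ 2 (R - I)` because `γ ≥ 2R`.
Integrating `F (A) ≤ G a + m (A - a)` and using `∫ A ≤ a` gives `∫ F (A) ≤ G a`.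
-/

open MeasureTheory Real Set

/-- The branch `x ≤ 1` of `f(i,r,x,γ)`, written with `I = log i` and `R = log r`. -/
noncomputable def contractionProfile (γ I R x : ℝ) : ℝ :=
  γ * (1 - (log x - I) ^ 2 / (log x - R) ^ 2)

noncomputable def contractionProfileDeriv (γ I R x : ℝ) : ℝ :=
  2 * γ * (R - I) * ((log x - I) / (x * (log x - R) ^ 3))

section ContractionProfile

variable {γ I R x : ℝ}

theorem hasDerivAt_contractionProfile (hx : 0 < x) (hxR : log x ≠ R) :
    HasDerivAt (contractionProfile γ I R) (contractionProfileDeriv γ I R x) x := by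
  have hL : log x - R ≠ 0 := sub_ne_zero.2 hxR
  have hlog := hasDerivAt_log hx.ne'
  have h : HasDerivAt (contractionProfile γ I R) _ x := ((hasDerivAt_const x (1 : ℝ)).sub
    (((hlog.sub_const I).pow 2).div ((hlog.sub_const R).pow 2) (pow_ne_zero 2 hL))).const_mul γ
  refine h.congr_deriv ?_
  simp only [contractionProfileDeriv, Pi.pow_apply]
  field_simp
  ring

theorem hasDerivAt_contractionProfileDeriv (hx : 0 < x) (hxR : log x ≠ R) :
    HasDerivAt (contractionProfileDeriv γ I R)
      (2 * γ * (R - I) * (((log x - R) - (log x - I) * (log x - R + 3)) /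
        (x ^ 2 * (log x - R) ^ 4))) x := by
  have hL : log x - R ≠ 0 := sub_ne_zero.2 hxR
  have hlog := hasDerivAt_log hx.ne'
  have h : HasDerivAt (contractionProfileDeriv γ I R) _ x :=
    ((hlog.sub_const I).div ((hasDerivAt_id x).mul ((hlog.sub_const R).pow 3))
      (mul_ne_zero hx.ne' (pow_ne_zero 3 hL))).const_mul (2 * γ * (R - I))
  refine h.congr_deriv ?_
  simp only [Pi.mul_apply, Pi.pow_apply, id]
  field_simp
  ring

theorem contractionProfileDeriv_nonneg (hγ : 0 ≤ γ) (hIR : I ≤ R) (hx : 0 ≤ x)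
    (hxI : log x ≤ I) : 0 ≤ contractionProfileDeriv γ I R x :=
  mul_nonneg (by nlinarith) <| div_nonneg_of_nonpos (by linarith) <|
    mul_nonpos_of_nonneg_of_nonpos hx (Odd.pow_nonpos ⟨1, rfl⟩ (by linarith))

theorem concaveOn_contractionProfile (hγ : 0 ≤ γ) (hI : 2 ≤ I) (hIR : I ≤ R) :
    ConcaveOn ℝ (Ioc 0 1) (contractionProfile γ I R) := by
  have hlogR : ∀ x ∈ Ioc (0 : ℝ) 1, log x ≠ R := fun x hx =>
    ((log_nonpos hx.1.le hx.2).trans_lt (by linarith)).ne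
  refine concaveOn_of_hasDerivWithinAt2_nonpos (convex_Ioc 0 1)
    (fun x hx => (hasDerivAt_contractionProfile hx.1 (hlogR x hx)).continuousAt.continuousWithinAt)
    (f' := contractionProfileDeriv γ I R)
    (f'' := fun x => 2 * γ * (R - I) * (((log x - R) - (log x - I) * (log x - R + 3)) /
        (x ^ 2 * (log x - R) ^ 4))) ?_ ?_ ?_ <;> rw [interior_Ioc] <;> intro x hx
  · exact (hasDerivAt_contractionProfile hx.1 (hlogR x (Ioo_subset_Ioc_self hx))).hasDerivWithinAt
  · exact (hasDerivAt_contractionProfileDeriv hx.1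
      (hlogR x (Ioo_subset_Ioc_self hx))).hasDerivWithinAt
  · have hL : log x ≤ 0 := log_nonpos hx.1.le hx.2.le
    -- with `p = I - log x ≥ 2` and `q = R - log x ≥ p` the numerator is `3p - q(1 + p) ≤ p(2 - p)`
    have hnum : (log x - R) - (log x - I) * (log x - R + 3) ≤ 0 := by
      nlinarith [mul_nonneg (by linarith : (0 : ℝ) ≤ R - I) (by linarith : 0 ≤ 1 + I - log x),
        mul_nonneg (by linarith : (0 : ℝ) ≤ I - log x) (by linarith : 0 ≤ I - log x - 2)]
    exact mul_nonpos_of_nonneg_of_nonpos (by nlinarith)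
      (div_nonpos_of_nonpos_of_nonneg hnum (by positivity))

theorem contractionProfile_one_ge (hI : 0 ≤ I) (hIR : I ≤ R) (hγ : 2 * R ≤ γ) :
    2 * (R - I) ≤ contractionProfile γ I R 1 := by
  rw [contractionProfile, log_one, zero_sub, zero_sub, neg_sq, neg_sq]
  rcases hI.eq_or_lt with rfl | hI0
  · simpa using hγ
  have hR : 0 < R := hI0.trans_le hIR
  rw [mul_one_sub, le_sub_iff_add_le, ← le_sub_iff_add_le', mul_div_assoc',
    div_le_iff₀ (by positivity)]
  nlinarith [mul_nonneg (mul_nonneg (by linarith : (0 : ℝ) ≤ γ - 2 * R) (by linarith : 0 ≤ R - I))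
    (by linarith : 0 ≤ R + I), mul_nonneg (mul_nonneg hR.le (by linarith : (0 : ℝ) ≤ R - I)) hI]

theorem ConcaveOn.le_add_mul_sub_of_hasDerivAt {S : Set ℝ} {f : ℝ → ℝ} {f' x y : ℝ}
    (hf : ConcaveOn ℝ S f) (hx : x ∈ S) (hy : y ∈ S) (hf' : HasDerivAt f f' x) :
    f y ≤ f x + f' * (y - x) := by
  rcases lt_trichotomy y x with hyx | rfl | hxy
  · have h := hf.le_slope_of_hasDerivAt hy hx hyx hf'
    rw [slope_def_field, le_div_iff₀ (sub_pos.2 hyx)] at h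
    linarith
  · simp
  · have h := hf.slope_le_of_hasDerivAt hx hy hxy hf'
    rw [slope_def_field, div_le_iff₀ (sub_pos.2 hxy)] at h
    linarith

theorem ite_contractionProfile_le_tangent {a : ℝ} (hγ : 2 * R ≤ γ) (hI : 2 ≤ I)
    (hIR : I ≤ R) (ha0 : 0 < a) (ha1 : a < 1) (hx : 0 < x) :
    (if x ≤ 1 then contractionProfile γ I R x else 2 * (R - I)) ≤
      contractionProfile γ I R a + contractionProfileDeriv γ I R a * (x - a) := by
  have hconc := concaveOn_contractionProfile (γ := γ) (by linarith) hI hIR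
  have ha : a ∈ Ioc (0 : ℝ) 1 := ⟨ha0, ha1.le⟩
  have hderiv := hasDerivAt_contractionProfile (γ := γ) (I := I) (R := R) ha0
    ((log_neg ha0 ha1).trans (by linarith)).ne
  split_ifs with hx1
  · exact hconc.le_add_mul_sub_of_hasDerivAt ha ⟨hx, hx1⟩ hderiv
  · have hm := contractionProfileDeriv_nonneg (γ := γ) (by linarith) hIR ha0.le
      ((log_neg ha0 ha1).le.trans (by linarith))
    calc 2 * (R - I) ≤ contractionProfile γ I R 1 := contractionProfile_one_ge (by linarith) hIR hγ
      _ ≤ contractionProfile γ I R a + contractionProfileDeriv γ I R a * (1 - a) :=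
        hconc.le_add_mul_sub_of_hasDerivAt ha ⟨one_pos, le_rfl⟩ hderiv
      _ ≤ _ := by gcongr; linarith

end ContractionProfile

theorem integral_le_of_ae_le_affine {Ω : Type*} [MeasurableSpace Ω] {μ : Measure Ω}
    [IsProbabilityMeasure μ] {X Y : Ω → ℝ} {a c m : ℝ} (hX : Integrable X μ)
    (hY : Integrable Y μ) (hm : 0 ≤ m) (hXa : ∫ ω, X ω ∂μ ≤ a)
    (hle : ∀ᵐ ω ∂μ, Y ω ≤ c + m * (X ω - a)) : ∫ ω, Y ω ∂μ ≤ c := by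
  have hlin : Integrable (fun ω => m * (X ω - a)) μ := (hX.sub (integrable_const a)).const_mul m
  calc ∫ ω, Y ω ∂μ ≤ ∫ ω, c + m * (X ω - a) ∂μ :=
        integral_mono_ae hY ((integrable_const c).add hlin) hle
    _ = c + m * (∫ ω, X ω ∂μ - a) := by
      rw [integral_add (integrable_const c) hlin, integral_const_mul,
        integral_sub hX (integrable_const a)]
      simp
    _ ≤ c := by nlinarith

theorem two_le_log_of_hundred_le {x : ℝ} (hx : 100 ≤ x) : 2 ≤ log x := by
  rw [le_log_iff_exp_le (by linarith), show (2 : ℝ) = 1 + 1 by norm_num, exp_add]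
  nlinarith [exp_one_lt_d9, exp_pos 1]

theorem stmt13_general {Ω : Type*} [MeasurableSpace Ω] (μ : Measure Ω) [IsProbabilityMeasure μ]
    (i r : ℕ) (hi : 100 ≤ i) (hir : i ≤ r)
    (γ a : ℝ) (hγ : 2 * Real.log (r : ℝ) ≤ γ) (ha0 : 0 < a) (ha1 : a < 1)
    (F : ℝ → ℝ)
    (hF : ∀ x : ℝ, 0 < x →
      F x = if x ≤ 1 then γ * (1 - (Real.log (x / (i : ℝ))) ^ 2 / (Real.log (x / (r : ℝ))) ^ 2)
            else 2 * Real.log ((r : ℝ) / (i : ℝ)))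
    (A : Ω → ℝ)
    (hApos : ∀ᵐ ω ∂μ, 0 < A ω)
    (hAint : Integrable A μ)
    (hFAint : Integrable (fun ω => F (A ω)) μ)
    (hAa : ∫ ω, A ω ∂μ ≤ a) :
    ∫ ω, F (A ω) ∂μ
      ≤ γ * (1 - (Real.log (a / (i : ℝ))) ^ 2 / (Real.log (a / (r : ℝ))) ^ 2) := by
  have hi100 : (100 : ℝ) ≤ i := by exact_mod_cast hi
  have hi0 : (0 : ℝ) < i := by linarith
  have hr0 : (0 : ℝ) < r := hi0.trans_le (by exact_mod_cast hir)
  have hIR : log i ≤ log r := log_le_log hi0 (by exact_mod_cast hir)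
  have hFlog : ∀ x, 0 < x →
      F x = if x ≤ 1 then contractionProfile γ (log i) (log r) x else 2 * (log r - log i) := by
    intro x hx
    rw [hF x hx, contractionProfile, log_div hx.ne' hi0.ne', log_div hx.ne' hr0.ne',
      log_div hr0.ne' hi0.ne']
  rw [log_div ha0.ne' hi0.ne', log_div ha0.ne' hr0.ne']
  have hI := two_le_log_of_hundred_le hi100
  refine integral_le_of_ae_le_affine hAint hFAint
    (contractionProfileDeriv_nonneg (γ := γ) (by linarith) hIR ha0.le
      ((log_neg ha0 ha1).le.trans (by linarith))) hAa ?_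
  filter_upwards [hApos] with ω hω
  rw [hFlog _ hω]
  exact ite_contractionProfile_le_tangent hγ hI hIR ha0 ha1 hω

/-- Jensen-type bound for the function `f(i,r,·,γ)`: if `F(x) = γ(1 - (log(x/i))²/(log(x/r))²)`
for `0 < x ≤ 1` and `F(x) = 2 log(r/i)` for `x > 1`, and `A > 0` a.e. with `∫ A dμ ≤ a < 1`,
then `∫ F(A) dμ ≤ γ(1 - (log(a/i))²/(log(a/r))²)`. -/
theorem stmt13 {Ω : Type*} [MeasurableSpace Ω] (μ : Measure Ω) [IsProbabilityMeasure μ]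
    (i r : ℕ) (hi : 100 ≤ i) (hir : i ≤ r)
    (γ a : ℝ) (hγ : 2 * Real.log (r : ℝ) ≤ γ) (ha0 : 0 < a) (ha1 : a < 1)
    (F : ℝ → ℝ)
    (hF : ∀ x : ℝ, 0 < x →
      F x = if x ≤ 1 then γ * (1 - (Real.log (x / (i : ℝ))) ^ 2 / (Real.log (x / (r : ℝ))) ^ 2)
            else 2 * Real.log ((r : ℝ) / (i : ℝ)))
    (A : Ω → ℝ) (hAmeas : Measurable A)
    (hApos : ∀ᵐ ω ∂μ, 0 < A ω)
    (hAint : Integrable A μ)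
    (hFAint : Integrable (fun ω => F (A ω)) μ)
    (hAa : ∫ ω, A ω ∂μ ≤ a) :
    ∫ ω, F (A ω) ∂μ
      ≤ γ * (1 - (Real.log (a / (i : ℝ))) ^ 2 / (Real.log (a / (r : ℝ))) ^ 2) :=
  stmt13_general μ i r hi hir γ a hγ ha0 ha1 F hF A hApos hAint hFAint hAa
end

section
/- Let a, γ, i, r be real numbers with 0 < a ≤ 1, γ ≥ 0, 1 ≤ i ≤ r − 1, and r ≥ 100. Then −2γ/(r·log(a/r)) + f(i, r−1, a, γ + 2γ/(r·log(a/r))) ≤ f(i, r, a, γ). -/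
/-!
Write `u = log (a / r)` and `v = log (a / (r - 1))`. The left side minus the right side is
`γ (log (a / i))² (1 / u² - (1 + 2 / (r u)) / v²)`, so for `γ ≥ 0` the inequality holds for every `i` as soon as
`v² ≤ u² + 2u / r`. Now `v = u + δ` with `δ = log (r / (r - 1))`, and the Taylor bounds
`1/r + 1/(2r²) ≤ δ ≤ 1/(r - 1)` give this whenever `u ≤ -2`, which holds since `a ≤ 1` and `r ≥ 100`.
-/

open Real

theorem add_sq_div_two_le_neg_log_one_sub {x : ℝ} (hx0 : 0 ≤ x) (hx1 : x < 1) :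
    x + x ^ 2 / 2 ≤ -log (1 - x) := by
  have hsum := hasSum_pow_div_log_of_abs_lt_one (abs_lt.2 ⟨by linarith, hx1⟩)
  have h := sum_le_hasSum (Finset.range 2) (fun n _ => by positivity) hsum
  norm_num [Finset.sum_range_succ] at h
  exact h

theorem log_sub_log_sub_one_bounds {r : ℝ} (hr : 1 < r) :
    1 / r + 1 / (2 * r ^ 2) ≤ log r - log (r - 1) ∧ log r - log (r - 1) ≤ 1 / (r - 1) := by
  have hr0 : 0 < r := by linarith
  have hr1 : 0 < r - 1 := by linarith
  constructor
  · have h := add_sq_div_two_le_neg_log_one_sub (x := 1 / r) (by positivity)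
      ((div_lt_one hr0).2 hr)
    rw [show 1 - 1 / r = (r - 1) / r by field_simp, log_div hr1.ne' hr0.ne'] at h
    convert h using 1 <;> ring
  · have h := log_le_sub_one_of_pos (div_pos hr0 hr1)
    rw [log_div hr0.ne' hr1.ne'] at h
    convert h using 1
    field_simp
    ring

theorem two_le_log_of_hundred_le_s15 {r : ℝ} (hr : 100 ≤ r) : 2 ≤ log r := by
  rw [le_log_iff_exp_le (by linarith), show (2:ℝ) = 1 + 1 by norm_num, exp_add]
  nlinarith [exp_one_lt_d9, exp_pos 1]

theorem sq_add_log_sub_log_sub_one_le {u r : ℝ} (hu : u ≤ -2) (hr : 4 ≤ r) :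
    (u + (log r - log (r - 1))) ^ 2 ≤ u ^ 2 + 2 * u / r := by
  obtain ⟨hlo, hhi⟩ := log_sub_log_sub_one_bounds (r := r) (by linarith)
  set δ := log r - log (r - 1)
  have hr0 : 0 < r := by linarith
  have hδ0 : 0 ≤ δ := le_trans (by positivity) hlo
  have hδsq : δ ^ 2 ≤ 2 / r ^ 2 := calc
    δ ^ 2 ≤ (1 / (r - 1)) ^ 2 := pow_le_pow_left₀ hδ0 hhi 2
    _ ≤ 2 / r ^ 2 := by
      rw [div_pow, div_le_div_iff₀ (by nlinarith) (by positivity)]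
      nlinarith
  have hgap : 1 / (2 * r ^ 2) ≤ δ - 1 / r := by linarith
  have : 2 / r ^ 2 ≤ -2 * u * (δ - 1 / r) := calc
    2 / r ^ 2 = 4 * (1 / (2 * r ^ 2)) := by ring
    _ ≤ -2 * u * (δ - 1 / r) := mul_le_mul (by linarith) hgap (by positivity) (by linarith)
  have e : (u + δ) ^ 2 - (u ^ 2 + 2 * u / r) = δ ^ 2 + 2 * u * (δ - 1 / r) := by ring
  linarith

theorem add_mul_one_sub_sq_div_le {γ r u v L : ℝ} (hγ : 0 ≤ γ) (hr : r ≠ 0) (hu : u ≠ 0)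
    (hv : v ≠ 0) (huv : v ^ 2 ≤ u ^ 2 + 2 * u / r) :
    -(2 * γ) / (r * u) + (γ + 2 * γ / (r * u)) * (1 - L ^ 2 / v ^ 2)
      ≤ γ * (1 - L ^ 2 / u ^ 2) := by
  have hratio : 1 / u ^ 2 ≤ (1 + 2 / (r * u)) / v ^ 2 := by
    rw [div_le_div_iff₀ (by positivity) (by positivity)]
    calc 1 * v ^ 2 ≤ u ^ 2 + 2 * u / r := by linarith
      _ = (1 + 2 / (r * u)) * u ^ 2 := by field_simp
  have e : γ * (1 - L ^ 2 / u ^ 2) - (-(2 * γ) / (r * u) + (γ + 2 * γ / (r * u)) * (1 - L ^ 2 / v ^ 2))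
      = γ * L ^ 2 * ((1 + 2 / (r * u)) / v ^ 2 - 1 / u ^ 2) := by ring
  have : 0 ≤ γ * L ^ 2 * ((1 + 2 / (r * u)) / v ^ 2 - 1 / u ^ 2) :=
    mul_nonneg (by positivity) (by linarith)
  linarith

theorem stmt15_general (a γ i r : ℝ) (ha0 : 0 < a) (ha1 : a ≤ 1) (hγ : 0 ≤ γ)
    (hr : 100 ≤ r) :
    -(2 * γ) / (r * Real.log (a / r))
        + (γ + 2 * γ / (r * Real.log (a / r))) *
            (1 - (Real.log (a / i)) ^ 2 / (Real.log (a / (r - 1))) ^ 2)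
      ≤ γ * (1 - (Real.log (a / i)) ^ 2 / (Real.log (a / r)) ^ 2) := by
  have hr0 : 0 < r := by linarith
  have hr1 : 0 < r - 1 := by linarith
  have hu : log (a / r) ≤ -2 := by
    rw [log_div ha0.ne' hr0.ne']
    linarith [log_nonpos ha0.le ha1, two_le_log_of_hundred_le_s15 hr]
  have hv : log (a / (r - 1)) = log (a / r) + (log r - log (r - 1)) := by
    rw [log_div ha0.ne' hr0.ne', log_div ha0.ne' hr1.ne']
    ring
  have hvneg : log (a / (r - 1)) < 0 := by
    rw [← log_one]
    exact log_lt_log (by positivity) ((div_lt_one hr1).2 (by linarith))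
  apply add_mul_one_sub_sq_div_le hγ hr0.ne' (by linarith) hvneg.ne
  rw [hv]
  exact sq_add_log_sub_log_sub_one_le hu (by linarith)

/-- With `f(i,ρ,a,γ) = γ(1 - (log(a/i))²/(log(a/ρ))²)`: for `0 < a ≤ 1`, `γ ≥ 0`,
`1 ≤ i ≤ r - 1`, `r ≥ 100`:
`-2γ/(r log(a/r)) + f(i, r-1, a, γ + 2γ/(r log(a/r))) ≤ f(i, r, a, γ)`. -/
theorem stmt15 (a γ i r : ℝ) (ha0 : 0 < a) (ha1 : a ≤ 1) (hγ : 0 ≤ γ)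
    (hi : 1 ≤ i) (hir : i ≤ r - 1) (hr : 100 ≤ r) :
    -(2 * γ) / (r * Real.log (a / r))
        + (γ + 2 * γ / (r * Real.log (a / r))) *
            (1 - (Real.log (a / i)) ^ 2 / (Real.log (a / (r - 1))) ^ 2)
      ≤ γ * (1 - (Real.log (a / i)) ^ 2 / (Real.log (a / r)) ^ 2) :=
  stmt15_general a γ i r ha0 ha1 hγ hr
end

section
/- Let γ, i, r be real numbers with γ ≥ 0, 1 ≤ i ≤ r, and r ≥ 21. Then the function g(x) = γ·(1 − (log(x/i))²/(log(x/r))²) is nondecreasing and concave on the interval (0, 1]. -/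
/-!
With `T x = log (x / i) / log (x / r) = (log x - log i) / (log x - log r)` we have
`g = γ (1 - T²)`. On `(0, 1]`, `T` is nonnegative and nonincreasing, so `g` is nondecreasing.
Moreover `T = 1 + (log r - log i) / (log x - log r)`, and `x ↦ 1 / (log x - b)` has second
derivative `(log x - b + 2) / (x² (log x - b)³)`, which is nonnegative while `log x ≤ b - 2`.
Since `r ≥ 21 > e²`, this covers `(0, 1]`, so `T` is convex there, hence so is `T²`, and `g`
is concave.
-/

open Real Set

lemma convexOn_inv_log_sub (b : ℝ) :
    ConvexOn ℝ (Ioc 0 (exp (b - 2))) (fun x => (log x - b)⁻¹) := by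
  have hlog_lt {x : ℝ} (hx : x ∈ Ioc 0 (exp (b - 2))) : log x ≤ b - 2 :=
    (log_le_iff_le_exp hx.1).2 hx.2
  refine convexOn_of_hasDerivWithinAt2_nonneg (convex_Ioc _ _)
    (f' := fun x => -(x⁻¹ / (log x - b) ^ 2))
    (f'' := fun x => (log x - b + 2) / (x ^ 2 * (log x - b) ^ 3)) ?_ ?_ ?_ ?_
  · refine ContinuousOn.inv₀ (f := fun x => log x - b)
      ((continuousOn_log.mono fun x hx => hx.1.ne').sub continuousOn_const) fun x hx => ?_
    linarith [hlog_lt hx]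
  all_goals
    rw [interior_Ioc]
    intro x hx
    have hx₀ : 0 < x := hx.1
    have hL : log x - b + 2 ≤ 0 := by linarith [hlog_lt (Ioo_subset_Ioc_self hx)]
    have hL₀ : log x - b ≠ 0 := by linarith
  · have : HasDerivAt (fun y => (log y - b)⁻¹) (-x⁻¹ / (log x - b) ^ 2) x :=
      ((hasDerivAt_log hx₀.ne').sub_const b).inv hL₀
    exact (this.congr_deriv (by ring)).hasDerivWithinAt
  · have : HasDerivAt (fun y => -(y⁻¹ / (log y - b) ^ 2)) _ x :=
      ((hasDerivAt_inv hx₀.ne').div (((hasDerivAt_log hx₀.ne').sub_const b).pow 2)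
        (pow_ne_zero 2 hL₀)).neg
    refine (this.congr_deriv ?_).hasDerivWithinAt
    simp only [Pi.pow_apply]
    field_simp
    ring
  · have : (log x - b) ^ 3 < 0 := Odd.pow_neg (by decide) (by linarith)
    exact div_nonneg_of_nonpos hL (mul_nonpos_of_nonneg_of_nonpos (by positivity) this.le)

lemma convexOn_log_sub_div_log_sub {a b : ℝ} (hab : a ≤ b) :
    ConvexOn ℝ (Ioc 0 (exp (b - 2))) (fun x => (log x - a) / (log x - b)) := by
  refine (((convexOn_inv_log_sub b).smul (sub_nonneg.2 hab)).add_const 1).congr fun x hx => ?_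
  have : log x - b ≠ 0 := by linarith [(log_le_iff_le_exp hx.1).2 hx.2]
  simp only [Pi.add_apply, smul_eq_mul]
  field_simp
  ring

lemma antitoneOn_log_sub_div_log_sub {a b : ℝ} (hab : a ≤ b) :
    AntitoneOn (fun x => (log x - a) / (log x - b)) (Ioo 0 (exp b)) := by
  intro x hx y hy hxy
  have hxb : log x < b := (log_lt_iff_lt_exp hx.1).2 hx.2
  have hyb : log y < b := (log_lt_iff_lt_exp hy.1).2 hy.2
  have hlog : log x ≤ log y := log_le_log hx.1 hxy
  show (log y - a) / (log y - b) ≤ (log x - a) / (log x - b)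
  rw [← neg_div_neg_eq, ← neg_div_neg_eq (log x - a), div_le_div_iff₀ (by linarith) (by linarith)]
  nlinarith [mul_nonneg (sub_nonneg.2 hlog) (sub_nonneg.2 hab)]

lemma exp_two_lt_nine : exp 2 < 9 := by
  rw [show (2 : ℝ) = 1 + 1 by norm_num, exp_add]
  nlinarith [exp_one_lt_three, exp_pos 1]

/-- For `γ ≥ 0`, `1 ≤ i ≤ r`, `r ≥ 21`, the function
`g(x) = γ(1 - (log(x/i))²/(log(x/r))²)` is nondecreasing and concave on `(0, 1]`. -/
theorem stmt16 (γ i r : ℝ) (hγ : 0 ≤ γ) (hi : 1 ≤ i) (hir : i ≤ r) (hr : 21 ≤ r) :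
    MonotoneOn (fun x : ℝ =>
        γ * (1 - (Real.log (x / i)) ^ 2 / (Real.log (x / r)) ^ 2)) (Set.Ioc 0 1) ∧
    ConcaveOn ℝ (Set.Ioc 0 1) (fun x : ℝ =>
        γ * (1 - (Real.log (x / i)) ^ 2 / (Real.log (x / r)) ^ 2)) := by
  have hi₀ : 0 < i := by linarith
  have hr₀ : 0 < r := by linarith
  have hab : log i ≤ log r := log_le_log hi₀ hir
  have hb : 2 ≤ log r := (le_log_iff_exp_le hr₀).2 (by linarith [exp_two_lt_nine])
  set T := fun x => (log x - log i) / (log x - log r)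
  have hg : EqOn (fun x => γ * (1 - T x ^ 2))
      (fun x => γ * (1 - log (x / i) ^ 2 / log (x / r) ^ 2)) (Ioc 0 1) := fun x hx => by
    simp only [T, log_div hx.1.ne' hi₀.ne', log_div hx.1.ne' hr₀.ne', div_pow]
  have hT₀ : ∀ ⦃x⦄, x ∈ Ioc (0 : ℝ) 1 → 0 ≤ T x := fun x hx =>
    div_nonneg_of_nonpos (by linarith [log_nonpos hx.1.le hx.2, log_nonneg hi])
      (by linarith [log_nonpos hx.1.le hx.2])
  have hT_anti : AntitoneOn T (Ioc 0 1) := (antitoneOn_log_sub_div_log_sub hab).mono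
    fun x hx => ⟨hx.1, hx.2.trans_lt (one_lt_exp_iff.2 (by linarith))⟩
  have hT_convex : ConvexOn ℝ (Ioc 0 1) T := (convexOn_log_sub_div_log_sub hab).subset
    (Ioc_subset_Ioc_right (one_le_exp (by linarith))) (convex_Ioc 0 1)
  constructor
  · refine MonotoneOn.congr (fun x hx y hy hxy => ?_) hg
    exact mul_le_mul_of_nonneg_left
      (sub_le_sub_left (pow_le_pow_left₀ (hT₀ hy) (hT_anti hx hy hxy) 2) 1) hγ
  · refine (((hT_convex.pow hT₀ 2).neg.add_const 1).smul hγ).congr fun x hx => ?_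
    refine Eq.trans ?_ (hg hx)
    simp only [Pi.add_apply, Pi.neg_apply, Pi.pow_apply, smul_eq_mul]
    ring
end

section
/- Let β, δ be real numbers with 0 ≤ β ≤ 2 and β ≤ δ. Then 10/9 ≤ (δ+2)·(5−2β+2δ)/(3−β+δ)² ≤ 20/9. Moreover, if β ≤ 3/2 then (δ+2)·(5−2β+2δ)/(3−β+δ)² ≤ 2. -/
/-!
With `t = δ - β ≥ 0`, `h̄(0) = (β + t + 2)(2t + 5)/(t + 3)²` is increasing in `β`, so the bounds
reduce to `β = 0`, `β = 2` and `β = 3/2`. There, clearing the denominator leaves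
`t (8t + 21) ≥ 0`, `t (2t + 3) ≥ 0` and `1/2 ≥ 0` respectively.
-/

/-- `h̄(0)` in the coordinates `β` and `t = δ - β`. -/
noncomputable def hbarZero (β t : ℝ) : ℝ := (β + t + 2) * (2 * t + 5) / (t + 3) ^ 2

theorem hbarZero_sub_eq (β δ : ℝ) :
    hbarZero β (δ - β) = (δ + 2) * (5 - 2 * β + 2 * δ) / (3 - β + δ) ^ 2 := by
  unfold hbarZero
  ring

theorem hbarZero_monotone {t : ℝ} (ht : -5 / 2 ≤ t) : Monotone (hbarZero · t) := by
  intro β β' h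
  simp only [hbarZero]
  have : 0 ≤ 2 * t + 5 := by linarith
  gcongr

theorem ten_ninths_le_hbarZero_zero {t : ℝ} (ht : 0 ≤ t) : 10 / 9 ≤ hbarZero 0 t := by
  unfold hbarZero
  rw [le_div_iff₀ (by positivity)]
  nlinarith [mul_nonneg ht (by linarith : (0 : ℝ) ≤ 8 * t + 21)]

theorem hbarZero_two_le {t : ℝ} (ht : 0 ≤ t) : hbarZero 2 t ≤ 20 / 9 := by
  unfold hbarZero
  rw [div_le_iff₀ (by positivity)]
  nlinarith [mul_nonneg ht (by linarith : (0 : ℝ) ≤ 2 * t + 3)]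

theorem hbarZero_three_halves_le (t : ℝ) : hbarZero (3 / 2) t ≤ 2 :=
  div_le_of_le_mul₀ (sq_nonneg _) zero_le_two (by nlinarith)

/-- For `0 ≤ β ≤ 2` and `β ≤ δ`: `10/9 ≤ h̄(0) ≤ 20/9`, where
`h̄(0) = (δ+2)(5-2β+2δ)/(3-β+δ)²`; moreover `h̄(0) ≤ 2` if `β ≤ 3/2`. -/
theorem stmt17 (β δ : ℝ) (hβ0 : 0 ≤ β) (hβ2 : β ≤ 2) (hβδ : β ≤ δ) :
    (10 / 9 ≤ (δ + 2) * (5 - 2 * β + 2 * δ) / (3 - β + δ) ^ 2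
      ∧ (δ + 2) * (5 - 2 * β + 2 * δ) / (3 - β + δ) ^ 2 ≤ 20 / 9)
    ∧ (β ≤ 3 / 2 → (δ + 2) * (5 - 2 * β + 2 * δ) / (3 - β + δ) ^ 2 ≤ 2) := by
  have ht : 0 ≤ δ - β := sub_nonneg.2 hβδ
  have hmono := hbarZero_monotone (by linarith : -5 / 2 ≤ δ - β)
  rw [← hbarZero_sub_eq]
  refine ⟨⟨?_, ?_⟩, fun h => ?_⟩
  · exact (ten_ninths_le_hbarZero_zero ht).trans (hmono hβ0)
  · exact (hmono hβ2).trans (hbarZero_two_le ht)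
  · exact (hmono h).trans (hbarZero_three_halves_le _)
end

section
/- Let β, δ, x be real numbers with 0 ≤ β ≤ 1, β ≤ δ, and 0 ≤ x ≤ 1. Then h̄(x) ≤ h(x), where h̄(x) = (δ+2)·(1−x)·(5−2β+2δ+x)/(3−β+δ)² and h(x) = 2·(2+δ)·(log(3−β+δ) − log(2−β+δ+x)) if x ≥ β, while h(x) = 2·(2+δ)·(log(3−β+δ) − log(2+δ)) + 2·(β−x) if x < β. -/
open Real

/-! With `a = 3 - β + δ` and `t = 1 - x` one has `h̄(x) = (δ + 2) · t(2a - t)/a²`, while on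
`x ≥ β` the function `h(x) = 2(δ + 2)(log a - log (a - t))`. Since `log(1 - s) ≤ -s`,
`2(log a - log (a - t)) ≥ 2t/a ≥ t(2a - t)/a²`. On `x < β` the function `h` continues linearly
with slope `-2`, whereas `h̄` has slope at most `2(δ + 2)/a ≤ 2` in absolute value, so the
inequality at `x = β` propagates to the left. -/

lemma mul_two_mul_sub_div_sq_le_two_mul_log_sub {a t : ℝ} (ha : 0 < a) (hta : t < a) :
    t * (2 * a - t) / a ^ 2 ≤ 2 * (log a - log (a - t)) := by
  have hlog : log (a - t) - log a ≤ -(t / a) := by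
    rw [← log_div (by linarith) ha.ne']
    calc log ((a - t) / a) ≤ (a - t) / a - 1 := log_le_sub_one_of_pos (by positivity)
      _ = -(t / a) := by field_simp; ring
  calc t * (2 * a - t) / a ^ 2 = 2 * (t / a) - (t / a) ^ 2 := by field_simp
    _ ≤ 2 * (t / a) := by linarith [sq_nonneg (t / a)]
    _ ≤ 2 * (log a - log (a - t)) := by linarith

lemma mul_two_mul_sub_div_sq_sub_le {a c t u : ℝ} (ha : 0 < a) (hc : 0 ≤ c) (hca : c ≤ a)
    (hu : 0 ≤ u) (hut : u ≤ t) :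
    c * (t * (2 * a - t) / a ^ 2) - c * (u * (2 * a - u) / a ^ 2) ≤ 2 * (t - u) := by
  have hdiff : c * (t * (2 * a - t) / a ^ 2) - c * (u * (2 * a - u) / a ^ 2)
      = c * (t - u) * (2 * a - t - u) / a ^ 2 := by ring
  rw [hdiff, div_le_iff₀ (by positivity)]
  calc c * (t - u) * (2 * a - t - u) ≤ c * (t - u) * (2 * a) :=
        mul_le_mul_of_nonneg_left (by linarith) (mul_nonneg hc (by linarith))
    _ ≤ a * (t - u) * (2 * a) := by gcongr
    _ = 2 * (t - u) * a ^ 2 := by ring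

theorem stmt18_general (β δ x : ℝ) (hβ0 : 0 ≤ β) (hβ1 : β ≤ 1) (hβδ : β ≤ δ) :
    (δ + 2) * (1 - x) * (5 - 2 * β + 2 * δ + x) / (3 - β + δ) ^ 2
      ≤ if β ≤ x then
          2 * (2 + δ) * (Real.log (3 - β + δ) - Real.log (2 - β + δ + x))
        else
          2 * (2 + δ) * (Real.log (3 - β + δ) - Real.log (2 + δ)) + 2 * (β - x) := by
  set a := 3 - β + δ
  have ha : 0 < a := by linarith
  have hc : 0 ≤ δ + 2 := by linarith
  have hbar : (δ + 2) * (1 - x) * (5 - 2 * β + 2 * δ + x) / a ^ 2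
      = (δ + 2) * ((1 - x) * (2 * a - (1 - x)) / a ^ 2) := by ring
  split_ifs with hβx
  · have hlog := mul_two_mul_sub_div_sq_le_two_mul_log_sub ha (t := 1 - x) (by linarith)
    rw [show a - (1 - x) = 2 - β + δ + x by ring] at hlog
    rw [hbar]
    linarith [mul_le_mul_of_nonneg_left hlog hc]
  · have hlog := mul_two_mul_sub_div_sq_le_two_mul_log_sub ha (t := 1 - β) (by linarith)
    rw [show a - (1 - β) = 2 + δ by ring] at hlog
    have hslope := mul_two_mul_sub_div_sq_sub_le ha hc (by linarith) (u := 1 - β) (t := 1 - x)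
      (by linarith) (by linarith)
    rw [hbar]
    linarith [mul_le_mul_of_nonneg_left hlog hc]

/-- For `0 ≤ β ≤ 1`, `β ≤ δ`, `0 ≤ x ≤ 1`: `h̄(x) ≤ h(x)`, where
`h̄(x) = (δ+2)(1-x)(5-2β+2δ+x)/(3-β+δ)²` and `h` is the piecewise function
`h(x) = 2(2+δ)(log(3-β+δ) - log(2-β+δ+x))` for `x ≥ β`,
`h(x) = 2(2+δ)(log(3-β+δ) - log(2+δ)) + 2(β-x)` for `x < β`. -/
theorem stmt18 (β δ x : ℝ) (hβ0 : 0 ≤ β) (hβ1 : β ≤ 1) (hβδ : β ≤ δ)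
    (hx0 : 0 ≤ x) (hx1 : x ≤ 1) :
    (δ + 2) * (1 - x) * (5 - 2 * β + 2 * δ + x) / (3 - β + δ) ^ 2
      ≤ if β ≤ x then
          2 * (2 + δ) * (Real.log (3 - β + δ) - Real.log (2 - β + δ + x))
        else
          2 * (2 + δ) * (Real.log (3 - β + δ) - Real.log (2 + δ)) + 2 * (β - x) :=
  stmt18_general β δ x hβ0 hβ1 hβδ
end

section
/- Let β, δ, y be real numbers with 0 ≤ β ≤ 2, β ≤ δ, and y > 0. Then the function x ↦ x·h̄(y/x) is nondecreasing on the set of reals x ≥ y, where h̄(z) = (δ+2)·(1−z)·(5−2β+2δ+z)/(3−β+δ)². -/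
/-!
Writing `a = 5 - 2β + 2δ`, one has `x · h̄(y/x) = (δ+2)/(3-β+δ)² · (a x - y²/x + (1-a) y)`
for `x ≠ 0`. Since `δ ≥ β ≥ 0`, both `a` and `δ + 2` are nonnegative, and `x ↦ a x - y²/x`
is nondecreasing on `x > 0`.
-/

open Set

lemma monotoneOn_mul_sub_div {a c : ℝ} (ha : 0 ≤ a) (hc : 0 ≤ c) :
    MonotoneOn (fun x => a * x - c / x) (Ioi 0) := by
  intro x (hx : 0 < x) x' _ hxx'
  dsimp only
  gcongr

lemma mul_one_sub_div_mul_add_div {x : ℝ} (hx : x ≠ 0) (a y : ℝ) :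
    x * ((1 - y / x) * (a + y / x)) = a * x - y ^ 2 / x + (1 - a) * y := by
  field_simp
  ring

lemma monotoneOn_mul_one_sub_div_mul_add_div {a : ℝ} (ha : 0 ≤ a) (y : ℝ) :
    MonotoneOn (fun x => x * ((1 - y / x) * (a + y / x))) (Ioi 0) :=
  ((monotoneOn_mul_sub_div ha (sq_nonneg y)).add_const ((1 - a) * y)).congr fun _ hx =>
    (mul_one_sub_div_mul_add_div (ne_of_gt hx) a y).symm

theorem stmt19_general (β δ y : ℝ) (hβ0 : 0 ≤ β) (hβδ : β ≤ δ) (hy : 0 < y) :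
    MonotoneOn (fun x : ℝ =>
        x * ((δ + 2) * (1 - y / x) * (5 - 2 * β + 2 * δ + y / x) / (3 - β + δ) ^ 2))
      (Set.Ici y) := by
  have ha : 0 ≤ 5 - 2 * β + 2 * δ := by linarith
  have hc : 0 ≤ (δ + 2) / (3 - β + δ) ^ 2 := div_nonneg (by linarith) (sq_nonneg _)
  refine (((monotone_mul_left_of_nonneg hc).comp_monotoneOn
    (monotoneOn_mul_one_sub_div_mul_add_div ha y)).mono (Ici_subset_Ioi.2 hy)).congr ?_
  intro x _
  simp only [Function.comp_apply]
  ring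

/-- For `0 ≤ β ≤ 2`, `β ≤ δ`, `y > 0`, the map `x ↦ x · h̄(y/x)` with
`h̄(z) = (δ+2)(1-z)(5-2β+2δ+z)/(3-β+δ)²` is nondecreasing on `x ≥ y`. -/
theorem stmt19 (β δ y : ℝ) (hβ0 : 0 ≤ β) (hβ2 : β ≤ 2) (hβδ : β ≤ δ) (hy : 0 < y) :
    MonotoneOn (fun x : ℝ =>
        x * ((δ + 2) * (1 - y / x) * (5 - 2 * β + 2 * δ + y / x) / (3 - β + δ) ^ 2))
      (Set.Ici y) :=
  stmt19_general β δ y hβ0 hβδ hy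
end
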